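/- Let G be the join of two cycles of lengths c₁ ≥ 4 and c₂ ≥ 4. Then G satisfies: for every edge e of G, the link of e is a cycle of length at least 4; and for every triangle t of G, the link of t consists of exactly 2 vertices and no edges. -/

import Mathlib

open SimpleGraph

/-- The graph join: the disjoint union of `G` and `H` together with all edges
between `V(G)` and `V(H)`. -/
def graphJoin {α β : Type*} (G : SimpleGraph α) (H : SimpleGraph β) :
    SimpleGraph (α ⊕ β) where
  Adj x y :=
    match x, y with
    | Sum.inl a, Sum.inl b => G.Adj a b
    | Sum.inl _, Sum.inr _ => True
    | Sum.inr _, Sum.inl _ => True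
    | Sum.inr a, Sum.inr b => H.Adj a b
  symm := ⟨by rintro (a | a) (b | b) h <;> first | trivial | exact h.symm⟩
  loopless := ⟨by
    rintro (a | a) h
    · exact G.irrefl h
    · exact H.irrefl h⟩

/-!
Cycles of length at least 4 are triangle-free, and the two neighbours `v ± 1` of a vertex are
distinct and non-adjacent. In the join, two adjacent vertices on the same side therefore have
the whole other side, a cycle of length at least 4, as common neighbours; a vertex `u` on one
side and `v` on the other have the two neighbours of `u` and the two of `v`, which span a
4-cycle. A triangle has two vertices on one side and one vertex `c` on the other, and its
common neighbours are the two non-adjacent neighbours of `c`.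
-/

theorem SimpleGraph.CliqueFree.commonNeighbors_eq_empty {V : Type*} {G : SimpleGraph V}
    (h : G.CliqueFree 3) {a b : V} (hab : G.Adj a b) : G.commonNeighbors a b = ∅ := by
  classical
  exact Set.eq_empty_of_forall_notMem fun w ⟨haw, hbw⟩ ↦
    h {a, b, w} (is3Clique_triple_iff.2 ⟨hab, haw, hbw⟩)

section cycleGraph

open Fin.CommRing

variable {n : ℕ}

theorem Fin.sub_one_ne_add_one (v : Fin (n + 3)) : v - 1 ≠ v + 1 := fun h ↦
  (by simp [Fin.ext_iff, Nat.mod_eq_of_lt] : (2 : Fin (n + 3)) ≠ 0) (by linear_combination -h)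

theorem cycleGraph_not_adj_sub_one_add_one (v : Fin (n + 4)) :
    ¬(cycleGraph (n + 4)).Adj (v - 1) (v + 1) := by
  rw [cycleGraph_adj]
  rintro (h | h)
  · exact (by simp [Fin.ext_iff, Nat.mod_eq_of_lt] : (3 : Fin (n + 4)) ≠ 0)
      (by linear_combination -h)
  · exact (by simp : (1 : Fin (n + 4)) ≠ 0) (by linear_combination h)

theorem cycleGraph_neighborSet_ncard (v : Fin (n + 3)) :
    ((cycleGraph (n + 3)).neighborSet v).ncard = 2 := by
  rw [cycleGraph_neighborSet, Set.ncard_pair (Fin.sub_one_ne_add_one v)]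

theorem cycleGraph_cliqueFree_three : (cycleGraph (n + 4)).CliqueFree 3 := by
  classical
  intro s hs
  obtain ⟨a, b, c, hab, hac, hbc, rfl⟩ := is3Clique_iff.1 hs
  have hb : b ∈ ({a - 1, a + 1} : Set _) := cycleGraph_neighborSet ▸ hab
  have hc : c ∈ ({a - 1, a + 1} : Set _) := cycleGraph_neighborSet ▸ hac
  rcases hb with rfl | rfl <;> rcases hc with rfl | rfl
  · exact hbc.ne rfl
  · exact cycleGraph_not_adj_sub_one_add_one a hbc
  · exact cycleGraph_not_adj_sub_one_add_one a hbc.symm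
  · exact hbc.ne rfl

end cycleGraph

section graphJoin

variable {α β : Type*} {A : SimpleGraph α} {B : SimpleGraph β}

@[simp]
theorem graphJoin_adj_inl_inl {a b : α} :
    (graphJoin A B).Adj (.inl a) (.inl b) ↔ A.Adj a b := .rfl

@[simp]
theorem graphJoin_adj_inl_inr {a : α} {b : β} : (graphJoin A B).Adj (.inl a) (.inr b) := trivial

@[simp]
theorem graphJoin_adj_inr_inl {a : β} {b : α} : (graphJoin A B).Adj (.inr a) (.inl b) := trivial

@[simp]
theorem graphJoin_adj_inr_inr {a b : β} :
    (graphJoin A B).Adj (.inr a) (.inr b) ↔ B.Adj a b := .rfl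

theorem graphJoin_induce_range_inl_iso : Nonempty ((graphJoin A B).induce (Set.range .inl) ≃g A) :=
  ⟨(Embedding.isoInduceRange (⟨.inl, .rfl⟩ : A ↪g graphJoin A B)).symm⟩

theorem graphJoin_induce_range_inr_iso : Nonempty ((graphJoin A B).induce (Set.range .inr) ≃g B) :=
  ⟨(Embedding.isoInduceRange (⟨.inr, .rfl⟩ : B ↪g graphJoin A B)).symm⟩

theorem graphJoin_commonNeighbors_inl_inl (hA : A.CliqueFree 3) {a b : α} (hab : A.Adj a b) :
    (graphJoin A B).commonNeighbors (.inl a) (.inl b) = Set.range .inr := by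
  have hempty := hA.commonNeighbors_eq_empty hab
  ext (p | q)
  · simpa [mem_commonNeighbors] using Set.eq_empty_iff_forall_notMem.1 hempty p
  · simp [mem_commonNeighbors]

theorem graphJoin_commonNeighbors_inr_inr (hB : B.CliqueFree 3) {a b : β} (hab : B.Adj a b) :
    (graphJoin A B).commonNeighbors (.inr a) (.inr b) = Set.range .inl := by
  have hempty := hB.commonNeighbors_eq_empty hab
  ext (p | q)
  · simp [mem_commonNeighbors]
  · simpa [mem_commonNeighbors] using Set.eq_empty_iff_forall_notMem.1 hempty q

theorem graphJoin_commonNeighbors_inl_inr (a : α) (b : β) :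
    (graphJoin A B).commonNeighbors (.inl a) (.inr b) =
      .inl '' A.neighborSet a ∪ .inr '' B.neighborSet b := by
  ext (p | q) <;> simp [mem_commonNeighbors]

def graphJoinCycleFourEmbedding {a₁ a₂ : α} {b₁ b₂ : β} (ha : a₁ ≠ a₂) (hna : ¬A.Adj a₁ a₂)
    (hb : b₁ ≠ b₂) (hnb : ¬B.Adj b₁ b₂) : cycleGraph 4 ↪g graphJoin A B where
  toFun := ![.inl a₁, .inr b₁, .inl a₂, .inr b₂]
  inj' := by intro i j; fin_cases i <;> fin_cases j <;> simp [ha, hb, ha.symm, hb.symm]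
  map_rel_iff' {i j} := by
    change (graphJoin A B).Adj (![.inl a₁, .inr b₁, .inl a₂, .inr b₂] i)
      (![.inl a₁, .inr b₁, .inl a₂, .inr b₂] j) ↔ _
    fin_cases i <;> fin_cases j <;> simp [A.adj_comm a₂ a₁, B.adj_comm b₂ b₁, hna, hnb] <;> decide

theorem graphJoin_induce_pair_union_pair_iso {a₁ a₂ : α} {b₁ b₂ : β} (ha : a₁ ≠ a₂)
    (hna : ¬A.Adj a₁ a₂) (hb : b₁ ≠ b₂) (hnb : ¬B.Adj b₁ b₂) :
    Nonempty ((graphJoin A B).induce (.inl '' {a₁, a₂} ∪ .inr '' {b₁, b₂}) ≃g cycleGraph 4) := by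
  have hrange : Set.range (graphJoinCycleFourEmbedding ha hna hb hnb) =
      .inl '' {a₁, a₂} ∪ .inr '' {b₁, b₂} := by
    change Set.range ![_, _, _, _] = _
    ext w
    simp [Matrix.range_cons, Set.image_pair]
    tauto
  exact ⟨hrange ▸ (graphJoinCycleFourEmbedding ha hna hb hnb).isoInduceRange.symm⟩

theorem graphJoin_inter_neighborSet_inl_inl_inr (hA : A.CliqueFree 3) {a b : α}
    (hab : A.Adj a b) (c : β) :
    (graphJoin A B).neighborSet (.inl a) ∩ (graphJoin A B).neighborSet (.inl b) ∩
      (graphJoin A B).neighborSet (.inr c) = .inr '' B.neighborSet c := by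
  rw [← commonNeighbors_eq, graphJoin_commonNeighbors_inl_inl hA hab]
  ext (p | q) <;> simp

theorem graphJoin_inter_neighborSet_inr_inr_inl (hB : B.CliqueFree 3) {a b : β}
    (hab : B.Adj a b) (c : α) :
    (graphJoin A B).neighborSet (.inr a) ∩ (graphJoin A B).neighborSet (.inr b) ∩
      (graphJoin A B).neighborSet (.inl c) = .inl '' A.neighborSet c := by
  rw [← commonNeighbors_eq, graphJoin_commonNeighbors_inr_inr hB hab]
  ext (p | q) <;> simp

/-- As the sides are triangle-free, a triangle has two vertices on one side; `c` is the third. -/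
theorem graphJoin_inter_neighborSet_of_triangle (hA : A.CliqueFree 3) (hB : B.CliqueFree 3)
    {x y z : α ⊕ β} (hxy : (graphJoin A B).Adj x y) (hxz : (graphJoin A B).Adj x z)
    (hyz : (graphJoin A B).Adj y z) :
    (∃ c, (graphJoin A B).neighborSet x ∩ (graphJoin A B).neighborSet y ∩
      (graphJoin A B).neighborSet z = .inl '' A.neighborSet c) ∨
    (∃ c, (graphJoin A B).neighborSet x ∩ (graphJoin A B).neighborSet y ∩
      (graphJoin A B).neighborSet z = .inr '' B.neighborSet c) := by
  classical
  rcases x with a | a <;> rcases y with b | b <;> rcases z with c | c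
  · exact (hA {a, b, c} (is3Clique_triple_iff.2 ⟨hxy, hxz, hyz⟩)).elim
  · exact .inr ⟨c, graphJoin_inter_neighborSet_inl_inl_inr hA hxy c⟩
  · rw [Set.inter_right_comm]
    exact .inr ⟨b, graphJoin_inter_neighborSet_inl_inl_inr hA hxz b⟩
  · rw [Set.inter_assoc, Set.inter_comm]
    exact .inl ⟨a, graphJoin_inter_neighborSet_inr_inr_inl hB hyz a⟩
  · rw [Set.inter_assoc, Set.inter_comm]
    exact .inr ⟨a, graphJoin_inter_neighborSet_inl_inl_inr hA hyz a⟩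
  · rw [Set.inter_right_comm]
    exact .inl ⟨b, graphJoin_inter_neighborSet_inr_inr_inl hB hxz b⟩
  · exact .inl ⟨c, graphJoin_inter_neighborSet_inr_inr_inl hB hxy c⟩
  · exact (hB {a, b, c} (is3Clique_triple_iff.2 ⟨hxy, hxz, hyz⟩)).elim

theorem SimpleGraph.IsIndepSet.graphJoin_image_inl {s : Set α} (hs : A.IsIndepSet s) :
    (graphJoin A B).IsIndepSet (.inl '' s) := by
  rintro _ ⟨p, hp, rfl⟩ _ ⟨q, hq, rfl⟩ hpq
  exact hs hp hq (ne_of_apply_ne _ hpq)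

theorem SimpleGraph.IsIndepSet.graphJoin_image_inr {s : Set β} (hs : B.IsIndepSet s) :
    (graphJoin A B).IsIndepSet (.inr '' s) := by
  rintro _ ⟨p, hp, rfl⟩ _ ⟨q, hq, rfl⟩ hpq
  exact hs hp hq (ne_of_apply_ne _ hpq)

end graphJoin

section joinOfCycles

variable {k₁ k₂ : ℕ}

local notation "J" => graphJoin (cycleGraph (k₁ + 4)) (cycleGraph (k₂ + 4))

theorem graphJoin_cycleGraph_induce_commonNeighbors_inl_inr (a : Fin (k₁ + 4))
    (b : Fin (k₂ + 4)) :
    Nonempty ((J).induce ((J).commonNeighbors (.inl a) (.inr b)) ≃g cycleGraph 4) := by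
  rw [graphJoin_commonNeighbors_inl_inr, cycleGraph_neighborSet, cycleGraph_neighborSet]
  exact graphJoin_induce_pair_union_pair_iso (Fin.sub_one_ne_add_one a)
    (cycleGraph_not_adj_sub_one_add_one a) (Fin.sub_one_ne_add_one b)
    (cycleGraph_not_adj_sub_one_add_one b)

theorem graphJoin_cycleGraph_edge_link {u v : Fin (k₁ + 4) ⊕ Fin (k₂ + 4)} (huv : (J).Adj u v) :
    ∃ m, 4 ≤ m ∧ Nonempty ((J).induce ((J).commonNeighbors u v) ≃g cycleGraph m) := by
  rcases u with a | a <;> rcases v with b | b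
  · rw [graphJoin_commonNeighbors_inl_inl cycleGraph_cliqueFree_three huv]
    exact ⟨k₂ + 4, by omega, graphJoin_induce_range_inr_iso⟩
  · exact ⟨4, le_rfl, graphJoin_cycleGraph_induce_commonNeighbors_inl_inr a b⟩
  · rw [commonNeighbors_symm]
    exact ⟨4, le_rfl, graphJoin_cycleGraph_induce_commonNeighbors_inl_inr b a⟩
  · rw [graphJoin_commonNeighbors_inr_inr cycleGraph_cliqueFree_three huv]
    exact ⟨k₁ + 4, by omega, graphJoin_induce_range_inl_iso⟩

theorem graphJoin_cycleGraph_triangle_link {x y z : Fin (k₁ + 4) ⊕ Fin (k₂ + 4)}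
    (hxy : (J).Adj x y) (hxz : (J).Adj x z) (hyz : (J).Adj y z) :
    ((J).neighborSet x ∩ (J).neighborSet y ∩ (J).neighborSet z).ncard = 2 ∧
      (J).IsIndepSet ((J).neighborSet x ∩ (J).neighborSet y ∩ (J).neighborSet z) := by
  rcases graphJoin_inter_neighborSet_of_triangle cycleGraph_cliqueFree_three
    cycleGraph_cliqueFree_three hxy hxz hyz with ⟨c, hc⟩ | ⟨c, hc⟩ <;> rw [hc]
  · exact ⟨(Set.ncard_image_of_injective _ Sum.inl_injective).trans
      (cycleGraph_neighborSet_ncard c),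
      IsIndepSet.graphJoin_image_inl
        (isIndepSet_neighborSet_of_triangleFree _ cycleGraph_cliqueFree_three c)⟩
  · exact ⟨(Set.ncard_image_of_injective _ Sum.inr_injective).trans
      (cycleGraph_neighborSet_ncard c),
      IsIndepSet.graphJoin_image_inr
        (isIndepSet_neighborSet_of_triangleFree _ cycleGraph_cliqueFree_three c)⟩

end joinOfCycles

/-- Let `G` be the join of two cycles of lengths `c₁, c₂ ≥ 4`. Then for every edge `uv`
of `G` the link of `uv` (the induced subgraph on `N_u ∩ N_v`) is a cycle of length at
least `4`, and for every triangle `{x, y, z}` of `G` the link of the triangle consists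
of exactly `2` vertices and no edges. -/
theorem stmt_11 (c₁ c₂ : ℕ) (hc₁ : 4 ≤ c₁) (hc₂ : 4 ≤ c₂)
    (G : SimpleGraph (Fin c₁ ⊕ Fin c₂))
    (hG : G = graphJoin (cycleGraph c₁) (cycleGraph c₂)) :
    (∀ u v, G.Adj u v →
      ∃ m, 4 ≤ m ∧
        Nonempty ((G.induce (G.neighborSet u ∩ G.neighborSet v)) ≃g cycleGraph m)) ∧
    (∀ x y z, G.Adj x y → G.Adj x z → G.Adj y z →
      (G.neighborSet x ∩ G.neighborSet y ∩ G.neighborSet z).ncard = 2 ∧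
      ∀ a ∈ G.neighborSet x ∩ G.neighborSet y ∩ G.neighborSet z,
        ∀ b ∈ G.neighborSet x ∩ G.neighborSet y ∩ G.neighborSet z, ¬ G.Adj a b) := by
  subst hG
  obtain ⟨k₁, rfl⟩ : ∃ k, c₁ = k + 4 := ⟨c₁ - 4, by omega⟩
  obtain ⟨k₂, rfl⟩ : ∃ k, c₂ = k + 4 := ⟨c₂ - 4, by omega⟩
  refine ⟨fun u v huv ↦ graphJoin_cycleGraph_edge_link huv, fun x y z hxy hxz hyz ↦ ?_⟩
  obtain ⟨hcard, hindep⟩ := graphJoin_cycleGraph_triangle_link hxy hxz hyz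
  exact ⟨hcard, fun a ha b hb hab ↦ hindep ha hb hab.ne hab⟩
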